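/- For every interval graph G, ν(G_γ) ≤ ν(G_α). -/

import Mathlib

open Set

/-- An interval representation of a simple graph `G`: each vertex `v` gets a nonempty
closed interval `[l v, r v] ⊆ ℝ`, and two distinct vertices are adjacent iff their
intervals intersect. -/
structure IntervalRep {V : Type*} (G : SimpleGraph V) where
  l : V → ℝ
  r : V → ℝ
  le : ∀ v, l v ≤ r v
  adj_iff : ∀ u v : V, u ≠ v →
    (G.Adj u v ↔ (Icc (l u) (r u) ∩ Icc (l v) (r v)).Nonempty)

namespace IntervalRep

variable {V : Type*} {G : SimpleGraph V}

/-- The interval of a vertex. -/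
def itv (R : IntervalRep G) (v : V) : Set ℝ := Icc (R.l v) (R.r v)

/-- The nesting `ν(R)`: the maximum length of a chain of strictly nested vertex intervals. -/
noncomputable def nesting (R : IntervalRep G) : ℕ :=
  sSup {k : ℕ | ∃ f : Fin k → V, ∀ i j : Fin k, i < j → R.itv (f i) ⊂ R.itv (f j)}

/-- `ν_R(x)`: the maximum length of a chain of strictly nested vertex intervals whose
outermost interval is `I(x)` (counting `x` itself). -/
noncomputable def nuAt (R : IntervalRep G) (x : V) : ℕ :=
  sSup {k : ℕ | ∃ f : Fin k → V,
    (∀ i j : Fin k, i < j → R.itv (f i) ⊂ R.itv (f j)) ∧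
    ∃ h : 0 < k, f ⟨k - 1, by omega⟩ = x}

end IntervalRep

/-- A graph is an interval graph if it admits an interval representation. -/
def IsIntervalGraph {V : Type*} (G : SimpleGraph V) : Prop := Nonempty (IntervalRep G)

/-- The nesting number `ν(G)`: the minimum nesting over all interval representations. -/
noncomputable def nu {V : Type*} (G : SimpleGraph V) : ℕ :=
  sInf {n : ℕ | ∃ R : IntervalRep G, R.nesting = n}

/-- `G_α`: add vertices `u, a₁, a₂, b₁, b₂` (coded as `0,1,2,3,4`), with `u` adjacent to all
of `G` and to `a₁, b₁`; `a₁ ~ a₂` and `b₁ ~ b₂`. -/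
def Galpha {V : Type*} (G : SimpleGraph V) : SimpleGraph (V ⊕ Fin 5) :=
  SimpleGraph.fromRel fun x y =>
    match x, y with
    | Sum.inl a, Sum.inl b => G.Adj a b
    | Sum.inl _, Sum.inr i => i = 0
    | Sum.inr _, Sum.inl _ => False
    | Sum.inr i, Sum.inr j =>
        i = 0 ∧ j = 1 ∨ i = 1 ∧ j = 2 ∨ i = 0 ∧ j = 3 ∨ i = 3 ∧ j = 4

/-- `G_β`: add vertices `u, a₁, a₂` (coded as `0,1,2`), with `u` adjacent to all of `G`
and to `a₁`; `a₁ ~ a₂`. -/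
def Gbeta {V : Type*} (G : SimpleGraph V) : SimpleGraph (V ⊕ Fin 3) :=
  SimpleGraph.fromRel fun x y =>
    match x, y with
    | Sum.inl a, Sum.inl b => G.Adj a b
    | Sum.inl _, Sum.inr i => i = 0
    | Sum.inr _, Sum.inl _ => False
    | Sum.inr i, Sum.inr j => i = 0 ∧ j = 1 ∨ i = 1 ∧ j = 2

/-- `G_γ`: add vertices `u, v, a₁, a₂, b₁, b₂` (coded as `0,1,2,3,4,5`), with `u ~ v`, both
adjacent to all of `G`; `u ~ a₁`, `a₁ ~ a₂`, `v ~ b₁`, `b₁ ~ b₂`. -/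
def Ggamma {V : Type*} (G : SimpleGraph V) : SimpleGraph (V ⊕ Fin 6) :=
  SimpleGraph.fromRel fun x y =>
    match x, y with
    | Sum.inl a, Sum.inl b => G.Adj a b
    | Sum.inl _, Sum.inr i => i = 0 ∨ i = 1
    | Sum.inr _, Sum.inl _ => False
    | Sum.inr i, Sum.inr j =>
        i = 0 ∧ j = 1 ∨ i = 0 ∧ j = 2 ∨ i = 2 ∧ j = 3 ∨ i = 1 ∧ j = 4 ∨ i = 4 ∧ j = 5

/-- The disjoint union of a family of graphs, on the sigma type of their vertex sets. -/
def sigmaGraph {p : ℕ} {V : Fin p → Type*} (G : ∀ i, SimpleGraph (V i)) :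
    SimpleGraph (Σ i, V i) :=
  SimpleGraph.fromRel fun x y => ∃ h : x.1 = y.1, (G y.1).Adj (h ▸ x.2) y.2

/-- The graph obtained from `H` by adding one new vertex adjacent to every vertex of `H`. -/
def joinVertex {W : Type*} (H : SimpleGraph W) : SimpleGraph (W ⊕ Unit) :=
  SimpleGraph.fromRel fun x y =>
    match x, y with
    | Sum.inl a, Sum.inl b => H.Adj a b
    | Sum.inl _, Sum.inr _ => True
    | _, _ => False

/-!
Both sides are compared with `ν(G) + 1`. Take a representation of `G` of nesting `ν(G)` inside
`[m, M]`. Adding `u = [m-2, M]`, `v = [m, M+2]` and the paths `a₁a₂`, `b₁b₂` hanging off the outer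
ends represents `G_γ`, and no new interval lies strictly inside another interval, so a nested
chain meets the new vertices at most at its top: `ν(G_γ) ≤ ν(G) + 1`.

Conversely, in a representation of `G_α` the arm `a₁` misses `I(x)` for `x ∈ G` while its
neighbour `a₂` misses `I(u)`; so `I(a₁)` lies on one side of `I(x)` and overhangs `I(u)` there,
and likewise for `b₁`. Since `a₁` and `b₁` are disjoint they overhang opposite ends, whence
`I(x) ⊊ I(u)` and `u` extends every chain of `G`: `ν(G_α) ≥ ν(G) + 1`. The same construction with
`u = [m-2, M+2]` represents `G_α`, so `ν(G_α)` is not the junk value `sInf ∅ = 0`.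
-/

namespace IntervalRep

variable {V W : Type*} {G : SimpleGraph V} {H : SimpleGraph W}

def mk' (l r : V → ℝ) (le : ∀ v, l v ≤ r v)
    (adj_iff_le : ∀ u v, u ≠ v → (G.Adj u v ↔ l u ≤ r v ∧ l v ≤ r u)) : IntervalRep G where
  l := l
  r := r
  le := le
  adj_iff u v huv := by
    rw [adj_iff_le u v huv, Icc_inter_Icc, nonempty_Icc, sup_le_iff, le_inf_iff, le_inf_iff]
    have := le u
    have := le v
    tauto

variable (R : IntervalRep G)

theorem adj_iff_le {u v : V} (huv : u ≠ v) : G.Adj u v ↔ R.l u ≤ R.r v ∧ R.l v ≤ R.r u := by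
  rw [R.adj_iff u v huv, Icc_inter_Icc, nonempty_Icc, sup_le_iff, le_inf_iff, le_inf_iff]
  have := R.le u
  have := R.le v
  tauto

theorem itv_ssubset_iff {u v : V} :
    R.itv u ⊂ R.itv v ↔ R.l v ≤ R.l u ∧ R.r u ≤ R.r v ∧ (R.l v < R.l u ∨ R.r u < R.r v) := by
  rw [itv, itv, ssubset_iff_subset_not_subset, Icc_subset_Icc_iff (R.le u),
    Icc_subset_Icc_iff (R.le v)]
  constructor
  · rintro ⟨⟨h₁, h₂⟩, h₃⟩
    exact ⟨h₁, h₂, by contrapose! h₃; exact ⟨h₃.1, h₃.2⟩⟩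
  · rintro ⟨h₁, h₂, h₃⟩
    exact ⟨⟨h₁, h₂⟩, by rintro ⟨h₄, h₅⟩; rcases h₃ with h₃ | h₃ <;> linarith⟩

theorem exists_bounds [Finite V] : ∃ m M : ℝ, m ≤ M ∧ ∀ v, m ≤ R.l v ∧ R.r v ≤ M := by
  obtain ⟨m, hm⟩ := (Set.finite_range R.l).bddBelow
  obtain ⟨M, hM⟩ := (Set.finite_range R.r).bddAbove
  exact ⟨min m M, max m M, min_le_max, fun v =>
    ⟨(min_le_left _ _).trans (hm ⟨v, rfl⟩), (hM ⟨v, rfl⟩).trans (le_max_right _ _)⟩⟩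

theorem arm_overhang {u x a p : V} (hux : G.Adj u x) (hap : G.Adj a p)
    (hax : ¬G.Adj a x) (hpu : ¬G.Adj p u) (hax_ne : a ≠ x) (hpu_ne : p ≠ u) :
    (R.l a < R.l u ∧ R.r a < R.l x) ∨ (R.r x < R.l a ∧ R.r u < R.r a) := by
  rw [R.adj_iff_le hux.ne] at hux
  rw [R.adj_iff_le hap.ne] at hap
  rw [R.adj_iff_le hax_ne, not_and_or, not_le, not_le] at hax
  rw [R.adj_iff_le hpu_ne, not_and_or, not_le, not_le] at hpu
  have := R.le p
  rcases hax with hax | hax <;> rcases hpu with hpu | hpu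
  all_goals first
    | exact .inl ⟨by linarith, by linarith⟩
    | exact .inr ⟨by linarith, by linarith⟩

def comap (φ : H ↪g G) : IntervalRep H :=
  mk' (R.l ∘ φ) (R.r ∘ φ) (fun w => R.le (φ w)) fun _ _ h =>
    φ.map_adj_iff.symm.trans (R.adj_iff_le (φ.injective.ne h))

theorem comap_itv (φ : H ↪g G) (w : W) : (R.comap φ).itv w = R.itv (φ w) := rfl

def chainLengths : Set ℕ :=
  {k | ∃ f : Fin k → V, ∀ i j : Fin k, i < j → R.itv (f i) ⊂ R.itv (f j)}

theorem zero_mem_chainLengths : 0 ∈ R.chainLengths :=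
  ⟨Fin.elim0, fun i => i.elim0⟩

theorem chainLengths_bddAbove [Finite V] : BddAbove R.chainLengths := by
  have := Fintype.ofFinite V
  refine ⟨Fintype.card V, fun k ⟨f, hf⟩ => ?_⟩
  have hf_inj : Function.Injective f := fun i j hij => by
    by_contra hne
    rcases lt_or_gt_of_ne hne with h | h
    · exact (hf i j h).ne (congrArg R.itv hij)
    · exact (hf j i h).ne (congrArg R.itv hij.symm)
  simpa using Fintype.card_le_of_injective f hf_inj

theorem le_nesting [Finite V] {k : ℕ} (hk : k ∈ R.chainLengths) : k ≤ R.nesting :=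
  le_csSup R.chainLengths_bddAbove hk

theorem nesting_le {n : ℕ} (h : ∀ k ∈ R.chainLengths, k ≤ n) : R.nesting ≤ n :=
  csSup_le ⟨0, R.zero_mem_chainLengths⟩ h

theorem nesting_mem_chainLengths [Finite V] : R.nesting ∈ R.chainLengths :=
  Nat.sSup_mem ⟨0, R.zero_mem_chainLengths⟩ R.chainLengths_bddAbove

theorem nesting_comap_add_one_le [Finite V] (φ : H ↪g G) (u : V)
    (hu : ∀ w, R.itv (φ w) ⊂ R.itv u) : (R.comap φ).nesting + 1 ≤ R.nesting := by
  have : Finite W := Finite.of_injective φ φ.injective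
  obtain ⟨f, hf⟩ := (R.comap φ).nesting_mem_chainLengths
  refine R.le_nesting ⟨Fin.snoc (φ ∘ f) u, fun i j hij => ?_⟩
  induction j using Fin.lastCases with
  | last =>
    induction i using Fin.lastCases with
    | last => exact absurd hij (lt_irrefl _)
    | cast i => simpa using hu (f i)
  | cast j =>
    induction i using Fin.lastCases with
    | last => exact absurd hij (not_lt.2 (Fin.le_last _))
    | cast i => simpa [comap_itv] using hf i j (Fin.castSucc_lt_castSucc_iff.1 hij)

theorem nesting_le_comap_add_one [Finite W] (φ : H ↪g G)
    (hmax : ∀ v, v ∉ Set.range φ → ∀ v', ¬R.itv v ⊂ R.itv v') :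
    R.nesting ≤ (R.comap φ).nesting + 1 := by
  refine R.nesting_le fun k ⟨f, hf⟩ => ?_
  cases k with
  | zero => omega
  | succ k =>
    have hrange : ∀ i : Fin k, ∃ w, φ w = f i.castSucc := fun i => by
      by_contra h
      exact hmax _ (by simpa using h) _ (hf _ _ (Fin.castSucc_lt_last i))
    choose g hg using hrange
    have := (R.comap φ).le_nesting ⟨g, fun i j hij => by
      simpa [comap_itv, hg] using hf _ _ (Fin.castSucc_lt_castSucc_iff.2 hij)⟩
    omega

end IntervalRep

section Nu

variable {V : Type*} {G : SimpleGraph V}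

theorem nu_le_nesting (R : IntervalRep G) : nu G ≤ R.nesting :=
  Nat.sInf_le ⟨R, rfl⟩

theorem exists_nesting_eq_nu (hG : IsIntervalGraph G) : ∃ R : IntervalRep G, R.nesting = nu G := by
  obtain ⟨R⟩ := hG
  exact Nat.sInf_mem (s := {n | ∃ R : IntervalRep G, R.nesting = n}) ⟨_, R, rfl⟩

theorem le_nu (hG : IsIntervalGraph G) {n : ℕ} (h : ∀ R : IntervalRep G, n ≤ R.nesting) :
    n ≤ nu G := by
  obtain ⟨R, hR⟩ := exists_nesting_eq_nu hG
  exact hR ▸ h R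

end Nu

section Galpha

variable {V : Type*} {G : SimpleGraph V}

@[simp]
theorem galpha_adj_inl_inl {a b : V} : (Galpha G).Adj (.inl a) (.inl b) ↔ G.Adj a b := by
  simp only [Galpha, SimpleGraph.fromRel_adj, ne_eq, Sum.inl.injEq]
  exact ⟨fun h => h.2.elim id G.adj_symm, fun h => ⟨h.ne, .inl h⟩⟩

def galphaInl (G : SimpleGraph V) : G ↪g Galpha G where
  toEmbedding := .inl
  map_rel_iff' := galpha_adj_inl_inl

namespace IntervalRep

variable (R : IntervalRep G) (m M : ℝ) (hmM : m ≤ M) (hR : ∀ v, m ≤ R.l v ∧ R.r v ≤ M)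

def toGalpha : IntervalRep (Galpha G) :=
  mk' (Sum.elim R.l ![m - 2, m - 3, m - 4, M + 2, M + 3])
    (Sum.elim R.r ![M + 2, m - 2, m - 3, M + 3, M + 4])
    (by rintro (v | i); exacts [R.le v, by fin_cases i <;> simp <;> linarith]) <| by
      rintro (a | i) (b | j) hne
      · simpa using R.adj_iff_le (by simpa using hne)
      · have := hR a; have := R.le a
        fin_cases j <;> simp [Galpha] <;> first | exact ⟨by linarith, by linarith⟩ | intro; linarith
      · have := hR b; have := R.le b
        fin_cases i <;> simp [Galpha] <;> first | exact ⟨by linarith, by linarith⟩ | intro; linarith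
      · fin_cases i <;> fin_cases j <;> simp [Galpha] at hne ⊢ <;> intros <;> linarith

end IntervalRep

theorem galpha_itv_inl_ssubset (R : IntervalRep (Galpha G)) (x : V) :
    R.itv (.inl x) ⊂ R.itv (.inr 0) := by
  have ha := R.arm_overhang (u := .inr 0) (x := .inl x) (a := .inr 1) (p := .inr 2)
    (by simp [Galpha]) (by simp [Galpha]) (by simp [Galpha]) (by simp [Galpha]) (by simp) (by simp)
  have hb := R.arm_overhang (u := .inr 0) (x := .inl x) (a := .inr 3) (p := .inr 4)
    (by simp [Galpha]) (by simp [Galpha]) (by simp [Galpha]) (by simp [Galpha]) (by simp) (by simp)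
  have hua := (R.adj_iff_le (u := .inr 0) (v := .inr 1) (by simp)).1 (by simp [Galpha])
  have hub := (R.adj_iff_le (u := .inr 0) (v := .inr 3) (by simp)).1 (by simp [Galpha])
  have hab := (R.adj_iff_le (u := .inr 1) (v := .inr 3) (by simp)).not.1 (by simp [Galpha])
  have := R.le (.inl x)
  rw [R.itv_ssubset_iff]
  rcases ha with ha | ha <;> rcases hb with hb | hb
  · exact absurd ⟨by linarith, by linarith⟩ hab
  · exact ⟨by linarith, by linarith, .inl (by linarith)⟩
  · exact ⟨by linarith, by linarith, .inl (by linarith)⟩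
  · exact absurd ⟨by linarith, by linarith⟩ hab

theorem nu_add_one_le_nesting_galpha [Finite V] (R : IntervalRep (Galpha G)) :
    nu G + 1 ≤ R.nesting :=
  (Nat.add_le_add_right (nu_le_nesting _) 1).trans
    (R.nesting_comap_add_one_le (galphaInl G) _ (galpha_itv_inl_ssubset R))

end Galpha

section Ggamma

variable {V : Type*} {G : SimpleGraph V}

@[simp]
theorem ggamma_adj_inl_inl {a b : V} : (Ggamma G).Adj (.inl a) (.inl b) ↔ G.Adj a b := by
  simp only [Ggamma, SimpleGraph.fromRel_adj, ne_eq, Sum.inl.injEq]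
  exact ⟨fun h => h.2.elim id G.adj_symm, fun h => ⟨h.ne, .inl h⟩⟩

def ggammaInl (G : SimpleGraph V) : G ↪g Ggamma G where
  toEmbedding := .inl
  map_rel_iff' := ggamma_adj_inl_inl

namespace IntervalRep

variable (R : IntervalRep G) (m M : ℝ) (hmM : m ≤ M) (hR : ∀ v, m ≤ R.l v ∧ R.r v ≤ M)

def toGgamma : IntervalRep (Ggamma G) :=
  mk' (Sum.elim R.l ![m - 2, m, m - 3, m - 4, M + 2, M + 3])
    (Sum.elim R.r ![M, M + 2, m - 2, m - 3, M + 3, M + 4])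
    (by rintro (v | i); exacts [R.le v, by fin_cases i <;> simp <;> linarith]) <| by
      rintro (a | i) (b | j) hne
      · simpa using R.adj_iff_le (by simpa using hne)
      · have := hR a; have := R.le a
        fin_cases j <;> simp [Ggamma] <;> first | exact ⟨by linarith, by linarith⟩ | intro; linarith
      · have := hR b; have := R.le b
        fin_cases i <;> simp [Ggamma] <;> first | exact ⟨by linarith, by linarith⟩ | intro; linarith
      · fin_cases i <;> fin_cases j <;> simp [Ggamma] at hne ⊢ <;>
          first | exact ⟨by linarith, by linarith⟩ | intros; linarith

theorem toGgamma_itv_inr_not_ssubset (i : Fin 6) (y : V ⊕ Fin 6) :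
    ¬(R.toGgamma m M hmM hR).itv (.inr i) ⊂ (R.toGgamma m M hmM hR).itv y := by
  rw [itv_ssubset_iff]
  rintro ⟨h₁, h₂, h₃⟩
  rcases y with w | j
  · have := hR w; have := R.le w
    fin_cases i <;> simp [toGgamma, mk'] at h₁ h₂ <;> linarith
  · fin_cases i <;> fin_cases j <;> simp [toGgamma, mk'] at h₁ h₂ h₃ <;> linarith

theorem nesting_toGgamma_le [Finite V] : (R.toGgamma m M hmM hR).nesting ≤ R.nesting + 1 :=
  (R.toGgamma m M hmM hR).nesting_le_comap_add_one (ggammaInl G) fun v hv _ => by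
    rcases v with w | i
    · exact absurd ⟨w, rfl⟩ hv
    · exact R.toGgamma_itv_inr_not_ssubset m M hmM hR i _

end IntervalRep

end Ggamma

/-- `ν(G_γ) ≤ ν(G_α)`. -/
theorem stmt_6 {V : Type*} [Fintype V] (G : SimpleGraph V) (hG : IsIntervalGraph G) :
    nu (Ggamma G) ≤ nu (Galpha G) := by
  obtain ⟨R, hR⟩ := exists_nesting_eq_nu hG
  obtain ⟨m, M, hmM, hbounds⟩ := R.exists_bounds
  calc nu (Ggamma G) ≤ (R.toGgamma m M hmM hbounds).nesting := nu_le_nesting _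
    _ ≤ nu G + 1 := hR ▸ R.nesting_toGgamma_le m M hmM hbounds
    _ ≤ nu (Galpha G) := le_nu ⟨R.toGalpha m M hmM hbounds⟩ nu_add_one_le_nesting_galpha
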